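/- arXiv:2605.24714 — 2 statements merged into one kernel-verified Lean document; each statement's English description precedes it below -/
import Mathlib

section
/- For every u ∈ {0,1,2}, every state s ∈ S_A, and all subsidies W ≤ W′, the active-idle difference satisfies Δu3(s,W′) − Δu3(s,W) ≥ (W′ − W)·(1 − γ·λu/(1−γ)). -/
/-!
Raising the subsidy from `W` to `W'` lowers the value function everywhere, but by at most
`(W' - W) / (1 - γ)`: both bounds come from the contraction property of the Bellman operator,
which moves each value by at most `W' - W` plus `γ` times the largest change one step later.
The active-idle difference `Δu3` changes by `W' - W` plus `γ λu` times the value change at the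
reset successor `s′u` minus the value change at the idle successor `s⁺`; the first is at least
`-(W' - W) / (1 - γ)` and the second is at most `0`.
-/

/-- Active action-value `Q0` (sensing) in the truncated relaxed single-arm problem. -/
noncomputable def QW0 (γ lam0 c0 : ℝ) (A : ℕ) (V : ℕ → ℕ → ℝ) (m b : ℕ) : ℝ :=
  (m : ℝ) + c0 + γ * (lam0 * V (min (m + 1) A) 1 +
    (1 - lam0) * V (min (m + 1) A) (min (b + 1) A))

/-- Active action-value `Q1` (communication) in the truncated relaxed problem. -/
noncomputable def QW1 (γ lam1 c1 : ℝ) (A : ℕ) (V : ℕ → ℕ → ℝ) (m b : ℕ) : ℝ :=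
  (m : ℝ) + c1 + γ * (lam1 * V (min (b + 1) A) (min (b + 1) A) +
    (1 - lam1) * V (min (m + 1) A) (min (b + 1) A))

/-- Active action-value `Q2` (joint) in the truncated relaxed problem. -/
noncomputable def QW2 (γ lam2 c2 : ℝ) (A : ℕ) (V : ℕ → ℕ → ℝ) (m b : ℕ) : ℝ :=
  (m : ℝ) + c2 + γ * (lam2 * V (min (b + 1) A) 1 +
    (1 - lam2) * V (min (m + 1) A) (min (b + 1) A))

/-- Idle action-value `Q3` with subsidy `W` in the truncated relaxed problem. -/
noncomputable def QW3 (γ W : ℝ) (A : ℕ) (V : ℕ → ℕ → ℝ) (m b : ℕ) : ℝ :=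
  (m : ℝ) - W + γ * V (min (m + 1) A) (min (b + 1) A)

/-- The relaxed Bellman operator `T_W` on the truncated state space `S_A`. -/
noncomputable def TW (γ lam0 lam1 lam2 c0 c1 c2 W : ℝ) (A : ℕ)
    (V : ℕ → ℕ → ℝ) (m b : ℕ) : ℝ :=
  min (QW0 γ lam0 c0 A V m b)
    (min (QW1 γ lam1 c1 A V m b)
      (min (QW2 γ lam2 c2 A V m b) (QW3 γ W A V m b)))

/-- The truncated state space `S_A`. -/
def truncStates (A : ℕ) : Finset (ℕ × ℕ) :=
  (Finset.Icc 1 A ×ˢ Finset.Icc 1 A).filter fun p => p.2 ≤ p.1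

@[simp]
theorem mem_truncStates {A m b : ℕ} :
    (m, b) ∈ truncStates A ↔ 1 ≤ b ∧ b ≤ m ∧ m ≤ A := by
  simp only [truncStates, Finset.mem_filter, Finset.mem_product, Finset.mem_Icc]
  omega

theorem Finset.forall_le_div_one_sub_of_contracting {ι : Type*} {S : Finset ι}
    {f : ι → ℝ} {γ t : ℝ} (hγ : γ < 1)
    (h : ∀ E, (∀ j ∈ S, f j ≤ E) → ∀ i ∈ S, f i ≤ t + γ * E) :
    ∀ i ∈ S, f i ≤ t / (1 - γ) := by
  intro i hi
  obtain ⟨j, hj, hmax⟩ := S.exists_max_image f ⟨i, hi⟩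
  have hjmax : f j ≤ t + γ * f j := h (f j) hmax j hj
  have hj_le : f j ≤ t / (1 - γ) := by
    rw [le_div_iff₀ (sub_pos.2 hγ)]
    linarith
  exact (hmax i hi).trans hj_le

theorem mul_convex_comb_le_add {γ lam x x' y y' E : ℝ} (hγ : 0 ≤ γ) (hlam : 0 ≤ lam)
    (hlam' : lam ≤ 1) (hx : x - x' ≤ E) (hy : y - y' ≤ E) :
    γ * (lam * x + (1 - lam) * y) ≤ γ * (lam * x' + (1 - lam) * y') + γ * E := by
  have hcomb : lam * (x - x') + (1 - lam) * (y - y') ≤ E := by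
    linarith [mul_le_mul_of_nonneg_left hx hlam,
      mul_le_mul_of_nonneg_left hy (sub_nonneg.2 hlam')]
  linarith [mul_le_mul_of_nonneg_left hcomb hγ]

section BellmanOperator

variable {γ lam0 lam1 lam2 c0 c1 c2 : ℝ} {A : ℕ}

theorem TW_le_TW_add (hγ : 0 ≤ γ) (hl0 : 0 ≤ lam0) (hl0' : lam0 ≤ 1)
    (hl1 : 0 ≤ lam1) (hl1' : lam1 ≤ 1) (hl2 : 0 ≤ lam2) (hl2' : lam2 ≤ 1)
    {V V' : ℕ → ℕ → ℝ} {Wa Wb t E : ℝ} (ht : 0 ≤ t) (hW : Wb - Wa ≤ t)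
    (hE : ∀ m b, (m, b) ∈ truncStates A → V m b - V' m b ≤ E)
    {m b : ℕ} (hs : (m, b) ∈ truncStates A) :
    TW γ lam0 lam1 lam2 c0 c1 c2 Wa A V m b ≤
      TW γ lam0 lam1 lam2 c0 c1 c2 Wb A V' m b + (t + γ * E) := by
  obtain ⟨hb, hbm, hmA⟩ := mem_truncStates.1 hs
  have hE' (m' b' : ℕ) (h1 : 1 ≤ b') (h2 : b' ≤ m') (h3 : m' ≤ A) :
      V m' b' - V' m' b' ≤ E :=
    hE m' b' (mem_truncStates.2 ⟨h1, h2, h3⟩)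
  have hidle := hE' (min (m + 1) A) (min (b + 1) A) (by omega) (by omega) (by omega)
  have hreset0 := hE' (min (m + 1) A) 1 le_rfl (by omega) (by omega)
  have hreset1 := hE' (min (b + 1) A) (min (b + 1) A) (by omega) le_rfl (by omega)
  have hreset2 := hE' (min (b + 1) A) 1 le_rfl (by omega) (by omega)
  have h0 : QW0 γ lam0 c0 A V m b ≤ QW0 γ lam0 c0 A V' m b + (t + γ * E) := by
    unfold QW0; linarith [mul_convex_comb_le_add hγ hl0 hl0' hreset0 hidle]
  have h1 : QW1 γ lam1 c1 A V m b ≤ QW1 γ lam1 c1 A V' m b + (t + γ * E) := by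
    unfold QW1; linarith [mul_convex_comb_le_add hγ hl1 hl1' hreset1 hidle]
  have h2 : QW2 γ lam2 c2 A V m b ≤ QW2 γ lam2 c2 A V' m b + (t + γ * E) := by
    unfold QW2; linarith [mul_convex_comb_le_add hγ hl2 hl2' hreset2 hidle]
  have h3 : QW3 γ Wa A V m b ≤ QW3 γ Wb A V' m b + (t + γ * E) := by
    unfold QW3; linarith [mul_le_mul_of_nonneg_left hidle hγ]
  calc TW γ lam0 lam1 lam2 c0 c1 c2 Wa A V m b
      ≤ min (QW0 γ lam0 c0 A V' m b + (t + γ * E))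
          (min (QW1 γ lam1 c1 A V' m b + (t + γ * E))
            (min (QW2 γ lam2 c2 A V' m b + (t + γ * E)) (QW3 γ Wb A V' m b + (t + γ * E)))) :=
        min_le_min h0 (min_le_min h1 (min_le_min h2 h3))
    _ = TW γ lam0 lam1 lam2 c0 c1 c2 Wb A V' m b + (t + γ * E) := by
        simp only [TW, min_add_add_right]

variable {VW : ℝ → ℕ → ℕ → ℝ}

theorem value_sub_value_le (hγ0 : 0 ≤ γ) (hγ1 : γ < 1)
    (hl0 : 0 ≤ lam0) (hl0' : lam0 ≤ 1) (hl1 : 0 ≤ lam1) (hl1' : lam1 ≤ 1)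
    (hl2 : 0 ≤ lam2) (hl2' : lam2 ≤ 1)
    (hfix : ∀ W : ℝ, ∀ m b : ℕ, 1 ≤ b → b ≤ m → m ≤ A →
      VW W m b = TW γ lam0 lam1 lam2 c0 c1 c2 W A (VW W) m b)
    {Wa Wb t : ℝ} (ht : 0 ≤ t) (hW : Wb - Wa ≤ t)
    {m b : ℕ} (hs : (m, b) ∈ truncStates A) :
    VW Wa m b - VW Wb m b ≤ t / (1 - γ) := by
  refine Finset.forall_le_div_one_sub_of_contracting
    (f := fun p => VW Wa p.1 p.2 - VW Wb p.1 p.2) hγ1 (fun E hE p hp => ?_) (m, b) hs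
  obtain ⟨hb, hbm, hmA⟩ := mem_truncStates.1 hp
  rw [hfix Wa _ _ hb hbm hmA, hfix Wb _ _ hb hbm hmA, sub_le_iff_le_add']
  exact TW_le_TW_add hγ0 hl0 hl0' hl1 hl1' hl2 hl2' ht hW (fun m b => hE (m, b)) hp

end BellmanOperator

theorem QW0_sub_QW3 (γ lam c W : ℝ) (A : ℕ) (V : ℕ → ℕ → ℝ) (m b : ℕ) :
    QW0 γ lam c A V m b - QW3 γ W A V m b =
      c + W + γ * lam * (V (min (m + 1) A) 1 - V (min (m + 1) A) (min (b + 1) A)) := by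
  unfold QW0 QW3; ring

theorem QW1_sub_QW3 (γ lam c W : ℝ) (A : ℕ) (V : ℕ → ℕ → ℝ) (m b : ℕ) :
    QW1 γ lam c A V m b - QW3 γ W A V m b =
      c + W + γ * lam * (V (min (b + 1) A) (min (b + 1) A) -
        V (min (m + 1) A) (min (b + 1) A)) := by
  unfold QW1 QW3; ring

theorem QW2_sub_QW3 (γ lam c W : ℝ) (A : ℕ) (V : ℕ → ℕ → ℝ) (m b : ℕ) :
    QW2 γ lam c A V m b - QW3 γ W A V m b =
      c + W + γ * lam * (V (min (b + 1) A) 1 - V (min (m + 1) A) (min (b + 1) A)) := by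
  unfold QW2 QW3; ring

theorem active_idle_gap_sub_ge {γ lam c W W' x x' y y' : ℝ} (hγlam : 0 ≤ γ * lam)
    (hx : x - x' ≤ (W' - W) / (1 - γ)) (hy : y' ≤ y) :
    (c + W' + γ * lam * (x' - y')) - (c + W + γ * lam * (x - y)) ≥
      (W' - W) * (1 - γ * lam / (1 - γ)) := by
  have hrhs : (W' - W) * (1 - γ * lam / (1 - γ)) =
      (W' - W) - γ * lam * ((W' - W) / (1 - γ)) := by
    ring
  rw [ge_iff_le, hrhs]
  linarith [mul_le_mul_of_nonneg_left hx hγlam, mul_le_mul_of_nonneg_left hy hγlam]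

theorem active_idle_difference_monotone_general
    (γ lam0 lam1 lam2 c0 c1 c2 : ℝ)
    (hγ0 : 0 < γ) (hγ1 : γ < 1)
    (hl0 : 0 < lam0) (hl0' : lam0 < 1)
    (hl1 : 0 < lam1) (hl1' : lam1 < 1)
    (hl2 : 0 < lam2) (hl2' : lam2 < 1)
    (A : ℕ)
    (VW : ℝ → ℕ → ℕ → ℝ)
    (hfix : ∀ W : ℝ, ∀ m b : ℕ, 1 ≤ b → b ≤ m → m ≤ A →
      VW W m b = TW γ lam0 lam1 lam2 c0 c1 c2 W A (VW W) m b) :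
    ∀ W W' : ℝ, W ≤ W' → ∀ m b : ℕ, 1 ≤ b → b ≤ m → m ≤ A →
      ((QW0 γ lam0 c0 A (VW W') m b - QW3 γ W' A (VW W') m b) -
          (QW0 γ lam0 c0 A (VW W) m b - QW3 γ W A (VW W) m b) ≥
        (W' - W) * (1 - γ * lam0 / (1 - γ))) ∧
      ((QW1 γ lam1 c1 A (VW W') m b - QW3 γ W' A (VW W') m b) -
          (QW1 γ lam1 c1 A (VW W) m b - QW3 γ W A (VW W) m b) ≥
        (W' - W) * (1 - γ * lam1 / (1 - γ))) ∧
      ((QW2 γ lam2 c2 A (VW W') m b - QW3 γ W' A (VW W') m b) -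
          (QW2 γ lam2 c2 A (VW W) m b - QW3 γ W A (VW W) m b) ≥
        (W' - W) * (1 - γ * lam2 / (1 - γ))) := by
  intro W W' hWW' m b hb hbm hmA
  have hdrop {m' b' : ℕ} (h1 : 1 ≤ b') (h2 : b' ≤ m') (h3 : m' ≤ A) :
      VW W m' b' - VW W' m' b' ≤ (W' - W) / (1 - γ) :=
    value_sub_value_le hγ0.le hγ1 hl0.le hl0'.le hl1.le hl1'.le hl2.le hl2'.le hfix
      (sub_nonneg.2 hWW') le_rfl (mem_truncStates.2 ⟨h1, h2, h3⟩)
  have hanti :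
      VW W' (min (m + 1) A) (min (b + 1) A) ≤ VW W (min (m + 1) A) (min (b + 1) A) := by
    have := value_sub_value_le (Wa := W') (Wb := W) (m := min (m + 1) A)
      (b := min (b + 1) A) hγ0.le hγ1 hl0.le hl0'.le hl1.le hl1'.le hl2.le hl2'.le hfix le_rfl
      (by linarith) (mem_truncStates.2 ⟨by omega, by omega, by omega⟩)
    rwa [zero_div, sub_nonpos] at this
  refine ⟨?_, ?_, ?_⟩
  · rw [QW0_sub_QW3, QW0_sub_QW3]
    exact active_idle_gap_sub_ge (by positivity) (hdrop (by omega) (by omega) (by omega)) hanti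
  · rw [QW1_sub_QW3, QW1_sub_QW3]
    exact active_idle_gap_sub_ge (by positivity) (hdrop (by omega) (by omega) (by omega)) hanti
  · rw [QW2_sub_QW3, QW2_sub_QW3]
    exact active_idle_gap_sub_ge (by positivity) (hdrop (by omega) (by omega) (by omega)) hanti

/-- For every active action `u ∈ {0,1,2}`, every state `s ∈ S_A`, and
all subsidies `W ≤ W'`, the active-idle difference satisfies
`Δu3(s,W') − Δu3(s,W) ≥ (W' − W)·(1 − γλu/(1−γ))`. -/
theorem active_idle_difference_monotone
    (γ lam0 lam1 lam2 c0 c1 c2 : ℝ)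
    (hγ0 : 0 < γ) (hγ1 : γ < 1)
    (hl0 : 0 < lam0) (hl0' : lam0 < 1)
    (hl1 : 0 < lam1) (hl1' : lam1 < 1)
    (hl2 : 0 < lam2) (hl2' : lam2 < 1)
    (hc0 : 0 ≤ c0) (hc1 : 0 ≤ c1) (hc2 : 0 ≤ c2)
    (A : ℕ) (hA : 1 ≤ A)
    (VW : ℝ → ℕ → ℕ → ℝ)
    (hfix : ∀ W : ℝ, ∀ m b : ℕ, 1 ≤ b → b ≤ m → m ≤ A →
      VW W m b = TW γ lam0 lam1 lam2 c0 c1 c2 W A (VW W) m b) :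
    ∀ W W' : ℝ, W ≤ W' → ∀ m b : ℕ, 1 ≤ b → b ≤ m → m ≤ A →
      ((QW0 γ lam0 c0 A (VW W') m b - QW3 γ W' A (VW W') m b) -
          (QW0 γ lam0 c0 A (VW W) m b - QW3 γ W A (VW W) m b) ≥
        (W' - W) * (1 - γ * lam0 / (1 - γ))) ∧
      ((QW1 γ lam1 c1 A (VW W') m b - QW3 γ W' A (VW W') m b) -
          (QW1 γ lam1 c1 A (VW W) m b - QW3 γ W A (VW W) m b) ≥
        (W' - W) * (1 - γ * lam1 / (1 - γ))) ∧
      ((QW2 γ lam2 c2 A (VW W') m b - QW3 γ W' A (VW W') m b) -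
          (QW2 γ lam2 c2 A (VW W) m b - QW3 γ W A (VW W) m b) ≥
        (W' - W) * (1 - γ * lam2 / (1 - γ))) :=
  active_idle_difference_monotone_general γ lam0 lam1 lam2 c0 c1 c2 hγ0 hγ1 hl0 hl0' hl1 hl1' hl2
    hl2' A VW hfix
end

section
/- Fix a state s ∈ S_A and define λ_max = max{λ0, λ1, λ2}. Suppose W* ∈ ℝ satisfies the Whittle fixed-point relation F_s(W*) = W*. Then for every Ŵ ∈ ℝ, the one-step update W̃ := F_s(Ŵ) satisfies |W̃ − W*| ≤ (2·γ·λ_max/(1−γ)) · |Ŵ − W*|. -/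
/-- The Whittle fixed-point map `F_s(W) = max_{u∈{0,1,2}} [γλu(V(s⁺,W) − V(s′u,W)) − cu]`
at the state `s = (m,b)` of the truncated relaxed problem. -/
noncomputable def Fwhittle (γ lam0 lam1 lam2 c0 c1 c2 : ℝ) (A : ℕ)
    (VW : ℝ → ℕ → ℕ → ℝ) (m b : ℕ) (W : ℝ) : ℝ :=
  max (γ * lam0 * (VW W (min (m + 1) A) (min (b + 1) A) -
        VW W (min (m + 1) A) 1) - c0)
    (max (γ * lam1 * (VW W (min (m + 1) A) (min (b + 1) A) -
          VW W (min (b + 1) A) (min (b + 1) A)) - c1)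
      (γ * lam2 * (VW W (min (m + 1) A) (min (b + 1) A) -
          VW W (min (b + 1) A) 1) - c2))

/-!
Every action-value is `γ` times a convex combination of successor values, plus a constant, and
the subsidy enters only the idle action, with coefficient `-1`. Hence `T_W V` moves by at most
`|W₁ - W₂| + γ ‖V₁ - V₂‖_∞` when `(W, V)` changes, and at the fixed points this gives
`‖V(·, W₁) - V(·, W₂)‖_∞ ≤ |W₁ - W₂| / (1 - γ)`. Each branch of `F_s` is `γ λᵤ` times a difference
of two values, so it moves by at most `2 γ λ_max ‖V(·, W₁) - V(·, W₂)‖_∞`; with `F_s(W*) = W*`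
this is the claimed bound.
-/

theorem Set.Finite.forall_le_div_one_sub_of_forall_le_add_mul {α : Type*} {S : Set α}
    (hS : S.Finite) {d : α → ℝ} {a γ : ℝ} (hγ : γ < 1)
    (h : ∀ D, (∀ t ∈ S, d t ≤ D) → ∀ s ∈ S, d s ≤ a + γ * D) :
    ∀ s ∈ S, d s ≤ a / (1 - γ) := by
  intro s hs
  obtain ⟨s₀, hs₀, hmax⟩ := S.exists_max_image d hS ⟨s, hs⟩
  have hself : d s₀ ≤ a + γ * d s₀ := h (d s₀) hmax s₀ hs₀
  calc d s ≤ d s₀ := hmax s hs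
    _ ≤ a / (1 - γ) := by
      rw [le_div_iff₀ (sub_pos.mpr hγ)]
      linarith

theorem abs_add_mul_convex_comb_sub_le {x γ l D X₁ X₂ Y₁ Y₂ : ℝ} (hγ : 0 ≤ γ)
    (hl₀ : 0 ≤ l) (hl₁ : l ≤ 1) (hX : |X₁ - X₂| ≤ D) (hY : |Y₁ - Y₂| ≤ D) :
    |(x + γ * (l * X₁ + (1 - l) * Y₁)) - (x + γ * (l * X₂ + (1 - l) * Y₂))| ≤ γ * D := by
  have hl₁' : 0 ≤ 1 - l := sub_nonneg.mpr hl₁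
  have hcomb : |l * (X₁ - X₂) + (1 - l) * (Y₁ - Y₂)| ≤ D :=
    calc |l * (X₁ - X₂) + (1 - l) * (Y₁ - Y₂)|
        ≤ l * |X₁ - X₂| + (1 - l) * |Y₁ - Y₂| := by
          refine (abs_add_le _ _).trans_eq ?_
          rw [abs_mul, abs_mul, abs_of_nonneg hl₀, abs_of_nonneg hl₁']
      _ ≤ l * D + (1 - l) * D := by gcongr
      _ = D := by ring
  calc |(x + γ * (l * X₁ + (1 - l) * Y₁)) - (x + γ * (l * X₂ + (1 - l) * Y₂))|
      = γ * |l * (X₁ - X₂) + (1 - l) * (Y₁ - Y₂)| := by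
        rw [← abs_of_nonneg hγ, ← abs_mul, abs_of_nonneg hγ]
        ring_nf
    _ ≤ γ * D := by gcongr

theorem abs_branch_sub_le {γ l L c E a₁ a₂ b₁ b₂ : ℝ} (hγ : 0 ≤ γ) (hl₀ : 0 ≤ l) (hlL : l ≤ L)
    (ha : |a₁ - a₂| ≤ E) (hb : |b₁ - b₂| ≤ E) :
    |(γ * l * (a₁ - b₁) - c) - (γ * l * (a₂ - b₂) - c)| ≤ 2 * γ * L * E := by
  have hE : 0 ≤ E := (abs_nonneg _).trans ha
  calc |(γ * l * (a₁ - b₁) - c) - (γ * l * (a₂ - b₂) - c)|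
      = γ * l * |(a₁ - a₂) - (b₁ - b₂)| := by
        rw [← abs_of_nonneg (mul_nonneg hγ hl₀), ← abs_mul, abs_of_nonneg (mul_nonneg hγ hl₀)]
        ring_nf
    _ ≤ γ * l * (E + E) := by
        gcongr
        exact (abs_sub _ _).trans (add_le_add ha hb)
    _ ≤ γ * L * (E + E) :=
        mul_le_mul_of_nonneg_right (mul_le_mul_of_nonneg_left hlL hγ) (by linarith)
    _ = 2 * γ * L * E := by ring

def truncatedStates (A : ℕ) : Set (ℕ × ℕ) := {p | 1 ≤ p.2 ∧ p.2 ≤ p.1 ∧ p.1 ≤ A}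

theorem truncatedStates_finite (A : ℕ) : (truncatedStates A).Finite :=
  ((Set.finite_Iic A).prod (Set.finite_Iic A)).subset fun _ hp => ⟨hp.2.2, hp.2.1.trans hp.2.2⟩

theorem successors_mem_truncatedStates {A m b : ℕ} (h : (m, b) ∈ truncatedStates A) :
    (min (m + 1) A, min (b + 1) A) ∈ truncatedStates A ∧
      (min (m + 1) A, 1) ∈ truncatedStates A ∧
      (min (b + 1) A, min (b + 1) A) ∈ truncatedStates A ∧
      (min (b + 1) A, 1) ∈ truncatedStates A := by
  simp only [truncatedStates, Set.mem_ofPred_eq] at h ⊢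
  omega

section Lipschitz

variable {γ lam0 lam1 lam2 c0 c1 c2 : ℝ} {A : ℕ}

theorem abs_TW_sub_TW_le (hγ : 0 ≤ γ) (hl0 : 0 ≤ lam0) (hl0' : lam0 ≤ 1)
    (hl1 : 0 ≤ lam1) (hl1' : lam1 ≤ 1) (hl2 : 0 ≤ lam2) (hl2' : lam2 ≤ 1)
    {V₁ V₂ : ℕ → ℕ → ℝ} {D : ℝ}
    (hD : ∀ p ∈ truncatedStates A, |V₁ p.1 p.2 - V₂ p.1 p.2| ≤ D)
    (W₁ W₂ : ℝ) {m b : ℕ} (hs : (m, b) ∈ truncatedStates A) :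
    |TW γ lam0 lam1 lam2 c0 c1 c2 W₁ A V₁ m b - TW γ lam0 lam1 lam2 c0 c1 c2 W₂ A V₂ m b| ≤
      |W₁ - W₂| + γ * D := by
  obtain ⟨hP, h0, h1, h2⟩ := successors_mem_truncatedStates hs
  have hactive : γ * D ≤ |W₁ - W₂| + γ * D := le_add_of_nonneg_left (abs_nonneg _)
  unfold TW QW0 QW1 QW2 QW3
  refine (abs_min_sub_min_le_max _ _ _ _).trans (max_le ?_ ?_)
  · exact (abs_add_mul_convex_comb_sub_le hγ hl0 hl0' (hD _ h0) (hD _ hP)).trans hactive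
  refine (abs_min_sub_min_le_max _ _ _ _).trans (max_le ?_ ?_)
  · exact (abs_add_mul_convex_comb_sub_le hγ hl1 hl1' (hD _ h1) (hD _ hP)).trans hactive
  refine (abs_min_sub_min_le_max _ _ _ _).trans (max_le ?_ ?_)
  · exact (abs_add_mul_convex_comb_sub_le hγ hl2 hl2' (hD _ h2) (hD _ hP)).trans hactive
  calc _ = |(W₂ - W₁) + γ * (V₁ (min (m + 1) A) (min (b + 1) A) -
          V₂ (min (m + 1) A) (min (b + 1) A))| := by ring_nf
    _ ≤ |W₁ - W₂| + γ * D := by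
        refine (abs_add_le _ _).trans ?_
        rw [abs_sub_comm, abs_mul, abs_of_nonneg hγ]
        gcongr
        exact hD _ hP

theorem abs_value_sub_le (hγ0 : 0 ≤ γ) (hγ1 : γ < 1) (hl0 : 0 ≤ lam0) (hl0' : lam0 ≤ 1)
    (hl1 : 0 ≤ lam1) (hl1' : lam1 ≤ 1) (hl2 : 0 ≤ lam2) (hl2' : lam2 ≤ 1)
    {VW : ℝ → ℕ → ℕ → ℝ}
    (hfix : ∀ W : ℝ, ∀ m b : ℕ, 1 ≤ b → b ≤ m → m ≤ A →
      VW W m b = TW γ lam0 lam1 lam2 c0 c1 c2 W A (VW W) m b)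
    (W₁ W₂ : ℝ) :
    ∀ p ∈ truncatedStates A, |VW W₁ p.1 p.2 - VW W₂ p.1 p.2| ≤ |W₁ - W₂| / (1 - γ) := by
  refine (truncatedStates_finite A).forall_le_div_one_sub_of_forall_le_add_mul hγ1 ?_
  rintro D hD ⟨m, b⟩ hs
  rw [hfix W₁ m b hs.1 hs.2.1 hs.2.2, hfix W₂ m b hs.1 hs.2.1 hs.2.2]
  exact abs_TW_sub_TW_le hγ0 hl0 hl0' hl1 hl1' hl2 hl2' hD W₁ W₂ hs

theorem abs_Fwhittle_sub_le (hγ : 0 ≤ γ) (hl0 : 0 ≤ lam0) (hl1 : 0 ≤ lam1) (hl2 : 0 ≤ lam2)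
    {VW : ℝ → ℕ → ℕ → ℝ} {W₁ W₂ E : ℝ}
    (hE : ∀ p ∈ truncatedStates A, |VW W₁ p.1 p.2 - VW W₂ p.1 p.2| ≤ E)
    {m b : ℕ} (hs : (m, b) ∈ truncatedStates A) :
    |Fwhittle γ lam0 lam1 lam2 c0 c1 c2 A VW m b W₁ -
        Fwhittle γ lam0 lam1 lam2 c0 c1 c2 A VW m b W₂| ≤
      2 * γ * max lam0 (max lam1 lam2) * E := by
  obtain ⟨hP, h0, h1, h2⟩ := successors_mem_truncatedStates hs
  unfold Fwhittle
  refine (abs_max_sub_max_le_max _ _ _ _).trans (max_le ?_ ?_)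
  · exact abs_branch_sub_le hγ hl0 (le_max_left _ _) (hE _ hP) (hE _ h0)
  refine (abs_max_sub_max_le_max _ _ _ _).trans (max_le ?_ ?_)
  · exact abs_branch_sub_le hγ hl1 ((le_max_left _ _).trans (le_max_right _ _))
      (hE _ hP) (hE _ h1)
  · exact abs_branch_sub_le hγ hl2 ((le_max_right _ _).trans (le_max_right _ _))
      (hE _ hP) (hE _ h2)

end Lipschitz

theorem whittle_one_step_update_error_general
    (γ lam0 lam1 lam2 c0 c1 c2 : ℝ)
    (hγ0 : 0 < γ) (hγ1 : γ < 1)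
    (hl0 : 0 < lam0) (hl0' : lam0 < 1)
    (hl1 : 0 < lam1) (hl1' : lam1 < 1)
    (hl2 : 0 < lam2) (hl2' : lam2 < 1)
    (A : ℕ)
    (VW : ℝ → ℕ → ℕ → ℝ)
    (hfix : ∀ W : ℝ, ∀ m b : ℕ, 1 ≤ b → b ≤ m → m ≤ A →
      VW W m b = TW γ lam0 lam1 lam2 c0 c1 c2 W A (VW W) m b)
    (m b : ℕ) (hb : 1 ≤ b) (hbm : b ≤ m) (hmA : m ≤ A)
    (Wstar : ℝ)
    (hWstar : Fwhittle γ lam0 lam1 lam2 c0 c1 c2 A VW m b Wstar = Wstar) :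
    ∀ What : ℝ,
      |Fwhittle γ lam0 lam1 lam2 c0 c1 c2 A VW m b What - Wstar| ≤
        (2 * γ * max lam0 (max lam1 lam2) / (1 - γ)) * |What - Wstar| := by
  intro What
  have hvalue := abs_value_sub_le hγ0.le hγ1 hl0.le hl0'.le hl1.le hl1'.le hl2.le hl2'.le
    hfix What Wstar
  conv_lhs => rw [← hWstar]
  exact (abs_Fwhittle_sub_le hγ0.le hl0.le hl1.le hl2.le hvalue ⟨hb, hbm, hmA⟩).trans_eq
    (by ring)

/-- If `W*` satisfies the Whittle fixed-point relation `F_s(W*) = W*`,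
then a one-step update `W̃ = F_s(Ŵ)` satisfies
`|W̃ − W*| ≤ (2γλ_max/(1−γ))·|Ŵ − W*|`, where `λ_max = max{λ0,λ1,λ2}`. -/
theorem whittle_one_step_update_error
    (γ lam0 lam1 lam2 c0 c1 c2 : ℝ)
    (hγ0 : 0 < γ) (hγ1 : γ < 1)
    (hl0 : 0 < lam0) (hl0' : lam0 < 1)
    (hl1 : 0 < lam1) (hl1' : lam1 < 1)
    (hl2 : 0 < lam2) (hl2' : lam2 < 1)
    (hc0 : 0 ≤ c0) (hc1 : 0 ≤ c1) (hc2 : 0 ≤ c2)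
    (A : ℕ) (hA : 1 ≤ A)
    (VW : ℝ → ℕ → ℕ → ℝ)
    (hfix : ∀ W : ℝ, ∀ m b : ℕ, 1 ≤ b → b ≤ m → m ≤ A →
      VW W m b = TW γ lam0 lam1 lam2 c0 c1 c2 W A (VW W) m b)
    (m b : ℕ) (hb : 1 ≤ b) (hbm : b ≤ m) (hmA : m ≤ A)
    (Wstar : ℝ)
    (hWstar : Fwhittle γ lam0 lam1 lam2 c0 c1 c2 A VW m b Wstar = Wstar) :
    ∀ What : ℝ,
      |Fwhittle γ lam0 lam1 lam2 c0 c1 c2 A VW m b What - Wstar| ≤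
        (2 * γ * max lam0 (max lam1 lam2) / (1 - γ)) * |What - Wstar| :=
  whittle_one_step_update_error_general γ lam0 lam1 lam2 c0 c1 c2 hγ0 hγ1 hl0 hl0' hl1 hl1' hl2 hl2'
    A VW hfix m b hb hbm hmA Wstar hWstar
end
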